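/- arXiv:2403.10089 — 5 statements merged into one kernel-verified Lean document; each statement's English description precedes it below -/
import Mathlib

section
/- Let F : ℝ^m → ℝ be twice continuously differentiable, let θ1, θ2 ∈ ℝ^m, and let γ(t) = θ1 + t·(θ2 − θ1) for t ∈ [0,1] be the straight-line curve in the θ-coordinates. Then the Riemannian energy of γ with respect to the Hessian metric ∇²F, namely ∫₀¹ ⟨θ2 − θ1, (∇²F)(γ(t)) (θ2 − θ1)⟩ dt, equals the Jeffreys–Bregman divergence S_F(θ1, θ2) = ⟨θ2 − θ1, ∇F(θ2) − ∇F(θ1)⟩. -/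
open scoped RealInnerProductSpace

/-- The Riemannian energy of the straight-line curve `γ(t) = θ1 + t • (θ2 - θ1)` with respect
to the Hessian metric `∇²F` equals the Jeffreys–Bregman divergence
`S_F(θ1, θ2) = ⟨θ2 − θ1, ∇F(θ2) − ∇F(θ1)⟩`. -/
theorem energy_straight_curve_eq_jeffreysBregman {m : ℕ}
    (F : EuclideanSpace ℝ (Fin m) → ℝ) (hF : ContDiff ℝ 2 F)
    (θ1 θ2 : EuclideanSpace ℝ (Fin m)) :
    (∫ t in (0:ℝ)..1,
        ⟪θ2 - θ1, fderiv ℝ (gradient F) (θ1 + t • (θ2 - θ1)) (θ2 - θ1)⟫)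
      = ⟪θ2 - θ1, gradient F θ2 - gradient F θ1⟫ := by
  set v := θ2 - θ1 with hv
  have hgrad : ContDiff ℝ 1 (gradient F) := by
    have h1 : ContDiff ℝ 1 (fderiv ℝ F) := hF.fderiv_right (by norm_num)
    have := ((InnerProductSpace.toDual ℝ
      (EuclideanSpace ℝ (Fin m))).symm.contDiff.comp h1 : ContDiff ℝ 1 _)
    exact this
  set c : ℝ → EuclideanSpace ℝ (Fin m) := fun t => θ1 + t • v with hc
  have hcd : ∀ t : ℝ, HasDerivAt c v t := by
    intro t
    simpa [hc] using ((hasDerivAt_id t).smul_const v).const_add θ1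
  have hderiv : ∀ t : ℝ, HasDerivAt (fun t => ⟪v, gradient F (c t)⟫)
      ⟪v, fderiv ℝ (gradient F) (c t) v⟫ t := by
    intro t
    have h1 : HasFDerivAt (gradient F) (fderiv ℝ (gradient F) (c t)) (c t) :=
      (hgrad.differentiable one_ne_zero (c t)).hasFDerivAt
    have h2 : HasDerivAt (fun t => gradient F (c t))
        (fderiv ℝ (gradient F) (c t) v) t := h1.comp_hasDerivAt t (hcd t)
    have := (hasDerivAt_const t v).inner ℝ h2
    simpa using this
  have hcont : Continuous fun t : ℝ => ⟪v, fderiv ℝ (gradient F) (c t) v⟫ := by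
    have hc' : Continuous c := by
      rw [hc]; continuity
    have hfc : Continuous (fderiv ℝ (gradient F)) :=
      hgrad.continuous_fderiv one_ne_zero
    exact continuous_const.inner ((hfc.comp hc').clm_apply continuous_const)
  have := intervalIntegral.integral_eq_sub_of_hasDerivAt
    (f := fun t => ⟪v, gradient F (c t)⟫) (a := (0:ℝ)) (b := 1)
    (fun t _ => hderiv t) (hcont.intervalIntegrable 0 1)
  rw [this]
  have h0 : c 0 = θ1 := by simp [hc]
  have h1 : c 1 = θ2 := by simp [hc, hv]
  simp only [h0, h1] at *
  rw [inner_sub_right]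
end

section
/- Let F : ℝ^m → ℝ be twice continuously differentiable and convex (so that its Hessian is positive semidefinite everywhere), let θ1, θ2 ∈ ℝ^m, and let γ(t) = θ1 + t·(θ2 − θ1). Then the Riemannian length of the θ-straight curve with respect to the Hessian metric, ∫₀¹ √(⟨θ2 − θ1, (∇²F)(γ(t)) (θ2 − θ1)⟩) dt, is at most √(S_F(θ1,θ2)); equivalently, (∫₀¹ √(⟨θ2 − θ1, (∇²F)(γ(t)) (θ2 − θ1)⟩) dt)² ≤ ⟨θ2 − θ1, ∇F(θ2) − ∇F(θ1)⟩. In particular, the Riemannian distance induced by a Hessian metric is upper bounded by the square root of the Jeffreys–Bregman divergence. -/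
open scoped RealInnerProductSpace
open MeasureTheory Filter

lemma aux_monotone_hasDerivAt_nonneg {φ : ℝ → ℝ} (hm : Monotone φ) {t c : ℝ}
    (h : HasDerivAt φ c t) : 0 ≤ c := by
  have h1 : Tendsto (slope φ t) (nhdsWithin t (Set.Ioi t)) (nhds c) :=
    (hasDerivAt_iff_tendsto_slope.1 h).mono_left
      (nhdsWithin_mono t (fun x hx => ne_of_gt hx))
  refine ge_of_tendsto h1 ?_
  filter_upwards [self_mem_nhdsWithin] with x hx
  rw [slope_def_field]
  exact div_nonneg (sub_nonneg.2 (hm (le_of_lt hx))) (sub_nonneg.2 (le_of_lt hx))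

/-- For a convex `C²` potential `F`, the Riemannian length of the θ-straight curve with respect
to the Hessian metric `∇²F` is at most the square root of the Jeffreys–Bregman divergence:
`(∫₀¹ √⟨θ2−θ1, ∇²F(γ(t))(θ2−θ1)⟩ dt)² ≤ ⟨θ2−θ1, ∇F(θ2) − ∇F(θ1)⟩`. -/
theorem length_straight_curve_sq_le_jeffreysBregman {m : ℕ}
    (F : EuclideanSpace ℝ (Fin m) → ℝ) (hF : ContDiff ℝ 2 F)
    (hconv : ConvexOn ℝ Set.univ F)
    (θ1 θ2 : EuclideanSpace ℝ (Fin m)) :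
    (∫ t in (0:ℝ)..1,
        Real.sqrt ⟪θ2 - θ1, fderiv ℝ (gradient F) (θ1 + t • (θ2 - θ1)) (θ2 - θ1)⟫) ^ 2
      ≤ ⟪θ2 - θ1, gradient F θ2 - gradient F θ1⟫ := by
  set v : EuclideanSpace ℝ (Fin m) := θ2 - θ1 with hv
  set γ : ℝ → EuclideanSpace ℝ (Fin m) := fun t => θ1 + t • v with hγ
  set g : ℝ → ℝ := fun t => ⟪v, fderiv ℝ (gradient F) (γ t) v⟫ with hg
  -- gradient F is C¹
  have hF1 : ContDiff ℝ 1 (gradient F) := by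
    have h := hF.fderiv_right (m := 1) le_rfl
    exact (InnerProductSpace.toDual ℝ (EuclideanSpace ℝ (Fin m))).symm.contDiff.comp h
  have hFd : Differentiable ℝ (gradient F) := hF1.differentiable one_ne_zero
  have hFdiff : Differentiable ℝ F := hF.differentiable (by norm_num)
  -- derivative of γ
  have hγd : ∀ t : ℝ, HasDerivAt γ v t := by
    intro t
    have := ((hasDerivAt_id t).smul_const v).const_add θ1
    rw [one_smul] at this
    exact this
  -- φ and its derivative
  set φ : ℝ → ℝ := fun t => ⟪v, gradient F (γ t)⟫ with hφ
  have hφd : ∀ t : ℝ, HasDerivAt φ (g t) t := by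
    intro t
    have h1 : HasDerivAt (fun t => gradient F (γ t))
        (fderiv ℝ (gradient F) (γ t) v) t :=
      ((hFd (γ t)).hasFDerivAt).comp_hasDerivAt t (hγd t)
    have h2 := (hasDerivAt_const t v).inner ℝ h1
    rw [inner_zero_left, add_zero] at h2
    exact h2
  -- ψ := F ∘ γ is convex and has derivative φ
  set ψ : ℝ → ℝ := fun t => F (γ t) with hψ
  have hψconv : ConvexOn ℝ Set.univ ψ := by
    have := hconv.comp_affineMap (AffineMap.lineMap θ1 θ2)
    have heq : ψ = F ∘ (AffineMap.lineMap θ1 θ2) := by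
      funext t
      simp [hψ, hγ, AffineMap.lineMap_apply, hv, add_comm]
    rw [heq]
    simpa using this
  have hψd : ∀ t : ℝ, HasDerivAt ψ (φ t) t := by
    intro t
    have h1 : HasGradientAt F (gradient F (γ t)) (γ t) :=
      (hFdiff (γ t)).hasGradientAt
    have h2 : HasFDerivAt F (InnerProductSpace.toDual ℝ (EuclideanSpace ℝ (Fin m)) (gradient F (γ t))) (γ t) :=
      (hasGradientAt_iff_hasFDerivAt).1 h1
    have h3 := h2.comp_hasDerivAt t (hγd t)
    have : (InnerProductSpace.toDual ℝ (EuclideanSpace ℝ (Fin m)) (gradient F (γ t))) v = φ t := by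
      rw [InnerProductSpace.toDual_apply_apply, real_inner_comm]
    rwa [this] at h3
  -- φ is monotone
  have hφmono : Monotone φ := by
    have hd : Differentiable ℝ ψ := fun t => (hψd t).differentiableAt
    have := hψconv.monotoneOn_deriv (fun x _ => hd x)
    rw [monotoneOn_univ] at this
    have heq : φ = deriv ψ := funext fun t => ((hψd t).deriv).symm
    rw [heq]
    exact this
  -- g is nonnegative
  have hg0 : ∀ t : ℝ, 0 ≤ g t := fun t => aux_monotone_hasDerivAt_nonneg hφmono (hφd t)
  -- g is continuous
  have hgc : Continuous g := by
    have h1 : Continuous (fderiv ℝ (gradient F)) := hF1.continuous_fderiv one_ne_zero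
    have h2 : Continuous γ := by
      apply Continuous.add continuous_const
      exact continuous_id.smul continuous_const
    have h3 : Continuous (fun t => (fderiv ℝ (gradient F) (γ t)) v) :=
      ((ContinuousLinearMap.apply ℝ (EuclideanSpace ℝ (Fin m)) v).continuous).comp (h1.comp h2)
    exact continuous_const.inner h3
  -- FTC
  have hFTC : ∫ t in (0:ℝ)..1, g t = ⟪v, gradient F θ2 - gradient F θ1⟫ := by
    rw [intervalIntegral.integral_eq_sub_of_hasDerivAt (fun t _ => hφd t)
      (hgc.intervalIntegrable 0 1)]
    have hγ1 : γ 1 = θ2 := by simp [hγ, hv]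
    have hγ0 : γ 0 = θ1 := by simp [hγ]
    simp [hφ, hγ1, hγ0, inner_sub_right]
  -- Cauchy–Schwarz step
  set I : ℝ := ∫ t in (0:ℝ)..1, Real.sqrt (g t) with hI
  have hsqrtc : Continuous (fun t => Real.sqrt (g t)) := Real.continuous_sqrt.comp hgc
  have hint1 : IntervalIntegrable (fun t => Real.sqrt (g t)) volume 0 1 :=
    hsqrtc.intervalIntegrable 0 1
  have hintg : IntervalIntegrable g volume 0 1 := hgc.intervalIntegrable 0 1
  have hexp : ∫ t in (0:ℝ)..1, (Real.sqrt (g t) - I) ^ 2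
      = (∫ t in (0:ℝ)..1, g t) - I ^ 2 := by
    have heq : ∀ t : ℝ, (Real.sqrt (g t) - I) ^ 2
        = g t - (2 * I) * Real.sqrt (g t) + I ^ 2 := by
      intro t
      have := Real.sq_sqrt (hg0 t)
      ring_nf
      nlinarith [this]
    simp only [heq]
    rw [intervalIntegral.integral_add (hintg.sub (hint1.const_mul (2 * I)))
        intervalIntegrable_const,
      intervalIntegral.integral_sub hintg (hint1.const_mul (2 * I)),
      intervalIntegral.integral_const_mul, intervalIntegral.integral_const, ← hI]
    simp [smul_eq_mul]
    ring
  have hnn : (0:ℝ) ≤ ∫ t in (0:ℝ)..1, (Real.sqrt (g t) - I) ^ 2 :=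
    intervalIntegral.integral_nonneg (by norm_num) (fun t _ => sq_nonneg _)
  have hkey : I ^ 2 ≤ ∫ t in (0:ℝ)..1, g t := by linarith [hexp ▸ hnn]
  calc (∫ t in (0:ℝ)..1,
        Real.sqrt ⟪θ2 - θ1, fderiv ℝ (gradient F) (θ1 + t • (θ2 - θ1)) (θ2 - θ1)⟫) ^ 2
      = I ^ 2 := rfl
    _ ≤ ∫ t in (0:ℝ)..1, g t := hkey
    _ = ⟪θ2 - θ1, gradient F θ2 - gradient F θ1⟫ := hFTC
end

section
/- Let g : ℝ → ℝ be continuous with g(θ) > 0 for all θ, and let h : ℝ → ℝ be an antiderivative of √g (i.e. h'(θ) = √(g(θ)) for all θ). Then for every continuously differentiable curve c : [0,1] → ℝ with c(0) = θ0 and c(1) = θ1, the Fisher–Rao length ∫₀¹ √(g(c(t)))·|c'(t)| dt is at least |h(θ1) − h(θ0)|, and the straight-line curve c(t) = θ0 + t·(θ1 − θ0) attains this value. Hence the Fisher–Rao distance of a uniparametric model with Fisher metric g, defined as the infimum of Fisher–Rao lengths of C¹ curves joining θ0 and θ1, equals |h(θ1) − h(θ0)|. -/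
/-- The 1D Fisher–Rao distance: for a positive continuous Fisher information `g` with
`h` an antiderivative of `√g`, every `C¹` curve joining `θ0` to `θ1` has Fisher–Rao length
at least `|h θ1 − h θ0|`, the straight line attains it, and the infimum of Fisher–Rao
lengths (the Fisher–Rao distance) equals `|h θ1 − h θ0|`. -/
theorem fisherRao_dist_one_dim (g : ℝ → ℝ) (hg : Continuous g) (hgpos : ∀ θ, 0 < g θ)
    (h : ℝ → ℝ) (hh : ∀ θ, HasDerivAt h (Real.sqrt (g θ)) θ) (θ0 θ1 : ℝ) :
    (∀ c : ℝ → ℝ, ContDiff ℝ 1 c → c 0 = θ0 → c 1 = θ1 →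
      |h θ1 - h θ0| ≤ ∫ t in (0:ℝ)..1, Real.sqrt (g (c t)) * |deriv c t|) ∧
    (∫ t in (0:ℝ)..1,
        Real.sqrt (g (θ0 + t * (θ1 - θ0))) * |deriv (fun s => θ0 + s * (θ1 - θ0)) t|)
      = |h θ1 - h θ0| ∧
    sInf {L : ℝ | ∃ c : ℝ → ℝ, ContDiff ℝ 1 c ∧ c 0 = θ0 ∧ c 1 = θ1 ∧
        L = ∫ t in (0:ℝ)..1, Real.sqrt (g (c t)) * |deriv c t|}
      = |h θ1 - h θ0| := by
  have hsqrt : Continuous fun θ => Real.sqrt (g θ) := Real.continuous_sqrt.comp hg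
  set d := θ1 - θ0 with hd
  -- Part 1: lower bound
  have key : ∀ c : ℝ → ℝ, ContDiff ℝ 1 c → c 0 = θ0 → c 1 = θ1 →
      |h θ1 - h θ0| ≤ ∫ t in (0:ℝ)..1, Real.sqrt (g (c t)) * |deriv c t| := by
    intro c hc h0 h1
    have hdc : Continuous (deriv c) := hc.continuous_deriv le_rfl
    have hder : ∀ t : ℝ, HasDerivAt c (deriv c t) t := fun t =>
      ((hc.differentiable one_ne_zero) t).hasDerivAt
    have hint : IntervalIntegrable (fun t => Real.sqrt (g (c t)) * deriv c t)
        MeasureTheory.volume 0 1 :=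
      ((hsqrt.comp hc.continuous).mul hdc).intervalIntegrable 0 1
    have heq : (∫ t in (0:ℝ)..1, Real.sqrt (g (c t)) * deriv c t) = h (c 1) - h (c 0) :=
      intervalIntegral.integral_eq_sub_of_hasDerivAt
        (fun t _ => (hh (c t)).comp t (hder t)) hint
    calc |h θ1 - h θ0|
        = |∫ t in (0:ℝ)..1, Real.sqrt (g (c t)) * deriv c t| := by rw [heq, h0, h1]
      _ ≤ ∫ t in (0:ℝ)..1, |Real.sqrt (g (c t)) * deriv c t| :=
          intervalIntegral.abs_integral_le_integral_abs (by norm_num)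
      _ = ∫ t in (0:ℝ)..1, Real.sqrt (g (c t)) * |deriv c t| := by
          refine intervalIntegral.integral_congr fun t _ => ?_
          rw [abs_mul, abs_of_nonneg (Real.sqrt_nonneg _)]
  -- the straight line
  have hline : ∀ t : ℝ, HasDerivAt (fun s => θ0 + s * d) d t := fun t => by
    simpa using ((hasDerivAt_id t).mul_const d).const_add θ0
  have hderiv_eq : deriv (fun s => θ0 + s * d) = fun _ => d := funext fun t => (hline t).deriv
  have hftc : (∫ t in (0:ℝ)..1, Real.sqrt (g (θ0 + t * d)) * d) = h θ1 - h θ0 := by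
    have hcontl : Continuous fun t : ℝ => Real.sqrt (g (θ0 + t * d)) :=
      hsqrt.comp (by continuity)
    have := intervalIntegral.integral_eq_sub_of_hasDerivAt
      (f := fun s => h (θ0 + s * d)) (f' := fun t => Real.sqrt (g (θ0 + t * d)) * d)
      (fun t _ => (hh (θ0 + t * d)).comp t (hline t))
      ((hcontl.mul continuous_const).intervalIntegrable 0 1)
    simpa [hd] using this
  have hnn : 0 ≤ ∫ t in (0:ℝ)..1, Real.sqrt (g (θ0 + t * d)) :=
    intervalIntegral.integral_nonneg (by norm_num) fun t _ => Real.sqrt_nonneg _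
  have part2 : (∫ t in (0:ℝ)..1,
      Real.sqrt (g (θ0 + t * d)) * |deriv (fun s => θ0 + s * d) t|) = |h θ1 - h θ0| := by
    simp only [hderiv_eq]
    calc (∫ t in (0:ℝ)..1, Real.sqrt (g (θ0 + t * d)) * |d|)
        = (∫ t in (0:ℝ)..1, Real.sqrt (g (θ0 + t * d))) * |d| :=
          intervalIntegral.integral_mul_const _ _
      _ = |(∫ t in (0:ℝ)..1, Real.sqrt (g (θ0 + t * d))) * d| := by
          rw [abs_mul, abs_of_nonneg hnn]
      _ = |∫ t in (0:ℝ)..1, Real.sqrt (g (θ0 + t * d)) * d| := by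
          rw [intervalIntegral.integral_mul_const]
      _ = |h θ1 - h θ0| := by rw [hftc]
  refine ⟨key, part2, ?_⟩
  -- Part 3: the infimum
  have hlineC : ContDiff ℝ 1 (fun s : ℝ => θ0 + s * d) :=
    contDiff_const.add (contDiff_id.mul contDiff_const)
  have hmem : |h θ1 - h θ0| ∈ {L : ℝ | ∃ c : ℝ → ℝ, ContDiff ℝ 1 c ∧ c 0 = θ0 ∧ c 1 = θ1 ∧
      L = ∫ t in (0:ℝ)..1, Real.sqrt (g (c t)) * |deriv c t|} :=
    ⟨fun s => θ0 + s * d, hlineC, by simp, by simp [hd], part2.symm⟩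
  refine le_antisymm (csInf_le ⟨|h θ1 - h θ0|, ?_⟩ hmem) (le_csInf ⟨_, hmem⟩ ?_)
  · rintro L ⟨c, hc, h0, h1, rfl⟩
    exact key c hc h0 h1
  · rintro L ⟨c, hc, h0, h1, rfl⟩
    exact key c hc h0 h1
end

section
/- Let V₀ be a real symmetric positive-definite d×d matrix and S₀ a real symmetric d×d matrix. Let M = (V₀^{1/2})⁻¹ · S₀ · (V₀^{1/2})⁻¹ where V₀^{1/2} is the positive-definite square root of V₀, and define V : ℝ → Matrix by V(t) = V₀^{1/2} · exp(t·M) · V₀^{1/2}. Then: (i) V(0) = V₀ and V'(0) = S₀; (ii) for every t ∈ ℝ, V(t) is symmetric positive definite; and (iii) V solves the geodesic equation of the trace metric on the SPD cone, i.e. V''(t) = V'(t) · V(t)⁻¹ · V'(t) for all t ∈ ℝ. -/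
/-- Entrywise derivative of a matrix-valued curve. -/
noncomputable def matDeriv {d : ℕ} (V : ℝ → Matrix (Fin d) (Fin d) ℝ) (t : ℝ) :
    Matrix (Fin d) (Fin d) ℝ :=
  Matrix.of fun i j => deriv (fun s => V s i j) t

open scoped ComplexOrder in
/-- The positive semidefinite square root of a positive semidefinite matrix (the definition
`Matrix.PosSemidef.sqrt` of the older Mathlib, since removed in favour of `CFC.sqrt`). -/
noncomputable def Matrix.PosSemidef.sqrt {n 𝕜 : Type*} [Fintype n] [DecidableEq n] [RCLike 𝕜]
    {A : Matrix n n 𝕜} (hA : A.PosSemidef) : Matrix n n 𝕜 :=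
  hA.1.eigenvectorUnitary.1 * Matrix.diagonal ((↑) ∘ (√·) ∘ hA.1.eigenvalues) *
    (star hA.1.eigenvectorUnitary : Matrix n n 𝕜)

open scoped Matrix

namespace SpdGeodesicAux

variable {d : ℕ}

/-- Entrywise derivative of `s ↦ P * exp(s•M) * Q`. -/
lemma hasDerivAt_entry (M P Q : Matrix (Fin d) (Fin d) ℝ) (t : ℝ) (i j : Fin d) :
    HasDerivAt (fun s : ℝ => (P * NormedSpace.exp (s • M) * Q) i j)
      ((P * (NormedSpace.exp (t • M) * M) * Q) i j) t := by
  letI : SeminormedRing (Matrix (Fin d) (Fin d) ℝ) := Matrix.linftyOpSemiNormedRing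
  letI : NormedRing (Matrix (Fin d) (Fin d) ℝ) := Matrix.linftyOpNormedRing
  letI : NormedAlgebra ℝ (Matrix (Fin d) (Fin d) ℝ) := Matrix.linftyOpNormedAlgebra
  have h1 : HasDerivAt (fun s : ℝ => NormedSpace.exp (s • M))
      (NormedSpace.exp (t • M) * M) t := hasDerivAt_exp_smul_const M t
  let L0 : Matrix (Fin d) (Fin d) ℝ →ₗ[ℝ] ℝ :=
    { toFun := fun X => (P * X * Q) i j
      map_add' := by intro X Y; simp [Matrix.mul_add, Matrix.add_mul]
      map_smul' := by intro c X; simp [Matrix.mul_smul, Matrix.smul_mul] }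
  let L : Matrix (Fin d) (Fin d) ℝ →L[ℝ] ℝ := ⟨L0, L0.continuous_of_finiteDimensional⟩
  exact L.hasFDerivAt.comp_hasDerivAt t h1

lemma matDeriv_conj_exp (M P Q : Matrix (Fin d) (Fin d) ℝ) (t : ℝ) :
    matDeriv (fun s => P * NormedSpace.exp (s • M) * Q) t
      = P * (NormedSpace.exp (t • M) * M) * Q := by
  ext i j
  simp only [matDeriv, Matrix.of_apply]
  exact (hasDerivAt_entry M P Q t i j).deriv

lemma sqrt_mul_self' {A : Matrix (Fin d) (Fin d) ℝ} (hA : A.PosSemidef) :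
    hA.sqrt * hA.sqrt = A := by
  have hspec := hA.1.spectral_theorem
  rw [Unitary.conjStarAlgAut_apply] at hspec
  refine Eq.trans ?_ hspec.symm
  have hUU : (star hA.1.eigenvectorUnitary : Matrix (Fin d) (Fin d) ℝ) *
      hA.1.eigenvectorUnitary = 1 := Unitary.coe_star_mul_self _
  have hD : Matrix.diagonal ((RCLike.ofReal : ℝ → ℝ) ∘ (√·) ∘ hA.1.eigenvalues) *
      Matrix.diagonal ((RCLike.ofReal : ℝ → ℝ) ∘ (√·) ∘ hA.1.eigenvalues)
        = Matrix.diagonal (RCLike.ofReal ∘ hA.1.eigenvalues) := by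
    rw [Matrix.diagonal_mul_diagonal]
    congr 1
    funext i
    simp only [Function.comp_apply]
    rw [← RCLike.ofReal_mul, Real.mul_self_sqrt (hA.eigenvalues_nonneg i)]
  simp only [Matrix.PosSemidef.sqrt, mul_assoc]
  rw [← mul_assoc _ (hA.1.eigenvectorUnitary : Matrix (Fin d) (Fin d) ℝ), hUU, one_mul,
    ← mul_assoc (Matrix.diagonal _), hD]

lemma posSemidef_sqrt' {A : Matrix (Fin d) (Fin d) ℝ} (hA : A.PosSemidef) :
    hA.sqrt.PosSemidef := by
  have h := (Matrix.PosSemidef.diagonal (d := ((↑) ∘ (√·) ∘ hA.1.eigenvalues : Fin d → ℝ))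
    (fun i => by simp [Real.sqrt_nonneg])).mul_mul_conjTranspose_same
      (hA.1.eigenvectorUnitary : Matrix (Fin d) (Fin d) ℝ)
  simpa [Matrix.PosSemidef.sqrt, Unitary.coe_star, Matrix.star_eq_conjTranspose, Function.comp_def] using h

lemma posDef_conj {P C : Matrix (Fin d) (Fin d) ℝ} (hP : P.PosDef)
    (hC : IsUnit C) : (Cᵀ * P * C).PosDef := by
  have h := hP.conjTranspose_mul_mul_same (Matrix.mulVec_injective_iff_isUnit.mpr hC)
  have hconv0 : Cᴴ = Cᵀ := by ext i j; simp [Matrix.conjTranspose_apply]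
  rw [hconv0] at h
  exact h

end SpdGeodesicAux

open SpdGeodesicAux in
/-- The curve `V(t) = V₀^{1/2} · exp(t·M) · V₀^{1/2}` with
`M = (V₀^{1/2})⁻¹ S₀ (V₀^{1/2})⁻¹` satisfies `V(0) = V₀`, `V'(0) = S₀`, stays symmetric
positive definite, and solves the SPD trace-metric geodesic equation
`V'' = V' · V⁻¹ · V'`. -/
theorem spd_geodesic_initial_value {d : ℕ} (V0 S0 : Matrix (Fin d) (Fin d) ℝ)
    (hV0 : V0.PosDef) (hS0 : S0.IsSymm)
    (V : ℝ → Matrix (Fin d) (Fin d) ℝ)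
    (hV : ∀ t : ℝ, V t =
      hV0.posSemidef.sqrt *
        NormedSpace.exp
          (t • ((hV0.posSemidef.sqrt)⁻¹ * S0 * (hV0.posSemidef.sqrt)⁻¹)) *
        hV0.posSemidef.sqrt) :
    V 0 = V0 ∧ matDeriv V 0 = S0 ∧ (∀ t : ℝ, (V t).PosDef) ∧
      ∀ t : ℝ, matDeriv (matDeriv V) t = matDeriv V t * (V t)⁻¹ * matDeriv V t := by
  classical
  set A : Matrix (Fin d) (Fin d) ℝ := hV0.posSemidef.sqrt with hAdef
  set M : Matrix (Fin d) (Fin d) ℝ := A⁻¹ * S0 * A⁻¹ with hMdef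
  have hA : A.PosSemidef := posSemidef_sqrt' hV0.posSemidef
  have hAA : A * A = V0 := sqrt_mul_self' hV0.posSemidef
  have hdet : IsUnit A.det := by
    refine isUnit_iff_ne_zero.mpr fun h => ?_
    have h2 : A.det * A.det = V0.det := by rw [← Matrix.det_mul, hAA]
    rw [h, mul_zero] at h2
    exact hV0.det_pos.ne' h2.symm
  have hAunit : IsUnit A := (Matrix.isUnit_iff_isUnit_det A).mpr hdet
  have hAinv : A * A⁻¹ = 1 := Matrix.mul_nonsing_inv A hdet
  have hAinv' : A⁻¹ * A = 1 := Matrix.nonsing_inv_mul A hdet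
  have hconv : ∀ X : Matrix (Fin d) (Fin d) ℝ, Xᴴ = Xᵀ := fun X => by
    ext i j; simp [Matrix.conjTranspose_apply]
  have hAt : Aᵀ = A := by rw [← hconv, hA.1]
  have hAinvT : (A⁻¹)ᵀ = A⁻¹ := by rw [Matrix.transpose_nonsing_inv, hAt]
  have hMt : Mᵀ = M := by
    rw [hMdef, Matrix.transpose_mul, Matrix.transpose_mul, hAinvT, hS0.eq, mul_assoc]
  -- function form of V
  have hVfun : V = fun s => A * NormedSpace.exp (s • M) * A := funext hV
  -- exp algebra facts
  have hexp_mul : ∀ a b : ℝ, NormedSpace.exp (a • M) * NormedSpace.exp (b • M)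
      = NormedSpace.exp ((a + b) • M) := fun a b => by
    rw [add_smul]
    exact (Matrix.exp_add_of_commute _ _
      (((Commute.refl M).smul_left a).smul_right b)).symm
  have hexp_unit : ∀ s : ℝ, NormedSpace.exp ((-s) • M) * NormedSpace.exp (s • M) = 1 := by
    intro s
    rw [hexp_mul, neg_add_cancel, zero_smul, NormedSpace.exp_zero]
  have hexp_isUnit : ∀ s : ℝ, IsUnit (NormedSpace.exp (s • M)) := fun s =>
    ⟨⟨NormedSpace.exp (s • M), NormedSpace.exp ((-s) • M),
      by rw [hexp_mul, add_neg_cancel, zero_smul, NormedSpace.exp_zero],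
      hexp_unit s⟩, rfl⟩
  have hexp_inv : ∀ s : ℝ, (NormedSpace.exp (s • M))⁻¹ = NormedSpace.exp ((-s) • M) := by
    intro s
    rw [neg_smul, Matrix.exp_neg]
  have hexpT : ∀ s : ℝ, (NormedSpace.exp (s • M))ᵀ = NormedSpace.exp (s • M) := fun s => by
    rw [← Matrix.exp_transpose, Matrix.transpose_smul, hMt]
  refine ⟨?_, ?_, ?_, ?_⟩
  · rw [hV 0, zero_smul, NormedSpace.exp_zero, mul_one, hAA]
  · rw [hVfun, matDeriv_conj_exp, zero_smul, NormedSpace.exp_zero, one_mul, hMdef]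
    rw [← mul_assoc, ← mul_assoc, hAinv, one_mul, mul_assoc, hAinv', mul_one]
  · intro t
    have hhalf : NormedSpace.exp (t • M)
        = (NormedSpace.exp ((t / 2) • M))ᵀ * 1 * NormedSpace.exp ((t / 2) • M) := by
      rw [hexpT, mul_one, hexp_mul, add_halves]
    have hEpd : (NormedSpace.exp (t • M)).PosDef := by
      rw [hhalf]
      exact posDef_conj Matrix.PosDef.one (hexp_isUnit _)
    have : V t = Aᵀ * NormedSpace.exp (t • M) * A := by rw [hV t, hAt]
    rw [this]
    exact posDef_conj hEpd hAunit
  · intro t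
    rw [hVfun]
    have hD1 : (matDeriv fun s => A * NormedSpace.exp (s • M) * A)
        = fun s => A * NormedSpace.exp (s • M) * (M * A) := by
      funext s
      rw [matDeriv_conj_exp]
      simp [mul_assoc]
    rw [hD1, matDeriv_conj_exp]
    beta_reduce
    have hinv : (A * NormedSpace.exp (t • M) * A)⁻¹
        = A⁻¹ * (NormedSpace.exp ((-t) • M) * A⁻¹) := by
      rw [Matrix.mul_inv_rev, Matrix.mul_inv_rev, hexp_inv]
    rw [hinv]
    have c1 : ∀ X : Matrix (Fin d) (Fin d) ℝ, A * (A⁻¹ * X) = X := fun X => by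
      rw [← mul_assoc, hAinv, one_mul]
    have c2 : ∀ X : Matrix (Fin d) (Fin d) ℝ, A⁻¹ * (A * X) = X := fun X => by
      rw [← mul_assoc, hAinv', one_mul]
    have c3 : ∀ X : Matrix (Fin d) (Fin d) ℝ,
        NormedSpace.exp ((-t) • M) * (NormedSpace.exp (t • M) * X) = X := fun X => by
      rw [← mul_assoc, hexp_unit, one_mul]
    simp only [mul_assoc]
    rw [c1, c2, c3]
end

section
/- The Calvo–Oller embedding separates rays of the SPD cone: let α ∈ ℝ and β ≠ 0, and for (m, V) ∈ ℝ^d × SPD(d) let f(m,V) = (det V)^α · [[V + β·m·mᵀ, β·m], [β·mᵀ, 1]]. If f(m₀,V₀) = λ · f(m₁,V₁) for some λ > 0, then λ = 1, m₀ = m₁ and V₀ = V₁. Consequently the Birkhoff–Calvo–Oller distance, defined from the projective Birkhoff distance composed with f, vanishes only between identical parameters and is a metric distance. -/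
open scoped Matrix

/-- The Calvo–Oller embedding of an elliptical parameter `(m, V)` into the SPD cone:
`f(m,V) = (det V)^α · [[V + β·m·mᵀ, β·m], [β·mᵀ, 1]]`. -/
noncomputable def calvoOller {d : ℕ} (α β : ℝ) (m : Fin d → ℝ)
    (V : Matrix (Fin d) (Fin d) ℝ) :
    Matrix (Fin d ⊕ Fin 1) (Fin d ⊕ Fin 1) ℝ :=
  (V.det ^ α) • Matrix.fromBlocks
    (V + β • Matrix.vecMulVec m m)
    (Matrix.of fun i (_ : Fin 1) => β * m i)
    (Matrix.of fun (_ : Fin 1) j => β * m j)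
    (Matrix.of fun (_ _ : Fin 1) => (1 : ℝ))

/-- The Calvo–Oller embedding separates rays of the SPD cone: if
`f(m₀,V₀) = λ·f(m₁,V₁)` with `λ > 0`, then `λ = 1`, `m₀ = m₁` and `V₀ = V₁`.
Hence the Birkhoff–Calvo–Oller projective distance vanishes only between identical
parameters and is a metric distance. -/
theorem calvoOller_separates_rays {d : ℕ} (α β : ℝ) (hβ : β ≠ 0)
    (m0 m1 : Fin d → ℝ) (V0 V1 : Matrix (Fin d) (Fin d) ℝ)
    (hV0 : V0.PosDef) (hV1 : V1.PosDef)
    (l : ℝ) (hl : 0 < l)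
    (h : calvoOller α β m0 V0 = l • calvoOller α β m1 V1) :
    l = 1 ∧ m0 = m1 ∧ V0 = V1 := by
  set c0 : ℝ := V0.det ^ α with hc0def
  set c1 : ℝ := V1.det ^ α with hc1def
  have hc0 : 0 < c0 := Real.rpow_pos_of_pos hV0.det_pos α
  have hc1 : 0 < c1 := Real.rpow_pos_of_pos hV1.det_pos α
  -- bottom-right entry
  have h11 : c0 = l * c1 := by
    have := congrFun (congrFun h (Sum.inr 0)) (Sum.inr 0)
    simpa [calvoOller, Matrix.fromBlocks, Matrix.smul_apply] using this
  have hm : m0 = m1 := by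
    funext j
    have := congrFun (congrFun h (Sum.inr 0)) (Sum.inl j)
    simp only [calvoOller, Matrix.smul_apply, Matrix.fromBlocks_apply₂₁,
      Matrix.of_apply, smul_eq_mul] at this
    rw [← hc0def, ← hc1def, h11] at this
    have hlc : l * c1 ≠ 0 := by positivity
    have h2 : (l * c1) * (β * m0 j) = (l * c1) * (β * m1 j) := by ring_nf; ring_nf at this; linarith
    exact mul_left_cancel₀ hβ (mul_left_cancel₀ hlc h2)
  have hV : V0 = V1 := by
    funext i j
    have := congrFun (congrFun h (Sum.inl i)) (Sum.inl j)
    simp only [calvoOller, Matrix.smul_apply, Matrix.fromBlocks_apply₁₁,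
      Matrix.add_apply, Matrix.smul_apply, Matrix.vecMulVec_apply, smul_eq_mul] at this
    rw [← hc0def, ← hc1def, h11, hm] at this
    have hlc : l * c1 ≠ 0 := by positivity
    have h2 : (l * c1) * (V0 i j + β * (m1 i * m1 j)) = (l * c1) * (V1 i j + β * (m1 i * m1 j)) := by
      ring_nf; ring_nf at this; linarith
    have := mul_left_cancel₀ hlc h2
    linarith
  have hc : c0 = c1 := by rw [hc0def, hc1def, hV]
  have hl1 : l = 1 := by
    have : l * c1 = 1 * c1 := by rw [← h11, hc, one_mul]
    exact mul_right_cancel₀ hc1.ne' this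
  exact ⟨hl1, hm, hV⟩
end
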